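/- arXiv:2102.08438 — 9 statements merged into one kernel-verified Lean document; each statement's English description precedes it below -/
import Mathlib

section
/- Let ξ : [t₁,t₂] → ℝ be continuous with ξ(t₁) ≤ -3/2 (decelerated, matter-dominated expansion) and ξ(t₂) ≥ -9/20 (observed accelerated expansion). Then there exist s, s' ∈ [t₁,t₂] with ξ(s) = -1 and ξ(s') = -6/5. Moreover, for any H ≠ 0 and ξ ∉ {-1,-3}, the quantity A = 2(6+5ξ)/(3H²(1+ξ)(3+ξ)) vanishes if and only if ξ = -6/5; hence along such an evolution the anticurvature scalar necessarily becomes singular (at ξ = -1) and vanishes (at ξ = -6/5), so every power Aⁿ with n a nonzero integer blows up at some epoch between deceleration and acceleration. -/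
/-- FLRW no-go theorem for Ricci-inverse gravity: a continuous ξ going from a
decelerated value ξ(t₁) ≤ -3/2 to an accelerated value ξ(t₂) ≥ -9/20 must pass
through ξ = -1 (where the anticurvature scalar A is singular) and ξ = -6/5
(where A vanishes): indeed A = 2(6+5ξ)/(3H²(1+ξ)(3+ξ)) = 0 iff ξ = -6/5. -/
theorem stmt0 (t₁ t₂ : ℝ) (ht : t₁ ≤ t₂) (ξ : ℝ → ℝ)
    (hcont : ContinuousOn ξ (Set.Icc t₁ t₂))
    (h1 : ξ t₁ ≤ -3/2) (h2 : ξ t₂ ≥ -9/20) :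
    (∃ s ∈ Set.Icc t₁ t₂, ξ s = -1) ∧
    (∃ s' ∈ Set.Icc t₁ t₂, ξ s' = -6/5) ∧
    (∀ H x : ℝ, H ≠ 0 → x ≠ -1 → x ≠ -3 →
      (2*(6 + 5*x)/(3*H^2*(1 + x)*(3 + x)) = 0 ↔ x = -6/5)) := by
  have key := intermediate_value_Icc ht hcont
  have hm1 : (-1 : ℝ) ∈ Set.Icc (ξ t₁) (ξ t₂) := ⟨by linarith, by linarith⟩
  have hm2 : (-6/5 : ℝ) ∈ Set.Icc (ξ t₁) (ξ t₂) := ⟨by linarith, by linarith⟩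
  obtain ⟨s, hs, hse⟩ := key hm1
  obtain ⟨s', hs', hse'⟩ := key hm2
  refine ⟨⟨s, hs, hse⟩, ⟨s', hs', hse'⟩, ?_⟩
  intro H x hH hx1 hx3
  have hden : 3*H^2*(1 + x)*(3 + x) ≠ 0 := by
    have h1 : (1 + x) ≠ 0 := fun h => hx1 (by linarith)
    have h3 : (3 + x) ≠ 0 := fun h => hx3 (by linarith)
    positivity
  rw [div_eq_zero_iff]
  constructor
  · rintro (h | h)
    · linarith
    · exact absurd h hden
  · intro h; left; rw [h]; ring
end

section
/- Let b, ξ, H be real numbers with H ≠ 0, 3+ξ ≠ 0, 1+ξ+b²/6 ≠ 0, 1 - b²/4 ≠ 0 and b² ≠ 10, and define A = (1/H²)·[ (4ξ+6+b²/2)/(3(3+ξ)(1+ξ+b²/6)) + 2(3+ξ)/((3+ξ)²(1-b²/4)) ]. Then A = 0 if and only if ξ = (24 - b⁴/4)/(2b² - 20). In particular, for b = 0 this condition reduces to ξ = -6/5, while at ξ = -6/5 one has A ≠ 0 unless b² = 48/5; hence a nonzero anisotropy shifts, but does not remove, the zero of the anticurvature scalar. -/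
/-!
Clearing denominators, `H² · (3 + ξ) · A` is the rational function
`N(b, ξ) / ((6 + 6ξ + b²)(4 - b²))` with numerator `N(b, ξ) = (80 - 8b²)ξ + 96 - b⁴`,
which is affine in `ξ`. So `A` vanishes exactly at the root `ξ = (96 - b⁴)/(8b² - 80)`
of `N`, and at `ξ = -6/5` the numerator collapses to `b²(48/5 - b²)`.
-/

namespace BianchiI

def anticurvatureNumerator (b ξ : ℝ) : ℝ := (80 - 8 * b ^ 2) * ξ + 96 - b ^ 4

theorem anticurvature_bracket_eq {b ξ : ℝ} (h1 : 3 + ξ ≠ 0) (h2 : 1 + ξ + b ^ 2 / 6 ≠ 0)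
    (h3 : 1 - b ^ 2 / 4 ≠ 0) :
    (4 * ξ + 6 + b ^ 2 / 2) / (3 * (3 + ξ) * (1 + ξ + b ^ 2 / 6))
        + 2 * (3 + ξ) / ((3 + ξ) ^ 2 * (1 - b ^ 2 / 4)) =
      anticurvatureNumerator b ξ / ((3 + ξ) * (6 + 6 * ξ + b ^ 2) * (4 - b ^ 2)) := by
  have h2' : 6 + 6 * ξ + b ^ 2 ≠ 0 := by contrapose! h2; linarith
  have h3' : 4 - b ^ 2 ≠ 0 := by contrapose! h3; linarith
  rw [div_add_div _ _ (by positivity) (by positivity), div_eq_div_iff (by positivity)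
    (by positivity), anticurvatureNumerator]
  ring

theorem anticurvatureNumerator_eq_zero_iff {b ξ : ℝ} (h4 : b ^ 2 ≠ 10) :
    anticurvatureNumerator b ξ = 0 ↔ ξ = (24 - b ^ 4 / 4) / (2 * b ^ 2 - 20) := by
  have h5 : 2 * b ^ 2 - 20 ≠ 0 := by contrapose! h4; linarith
  rw [eq_div_iff h5, anticurvatureNumerator]
  constructor
  · intro h
    linear_combination (-1 / 4 : ℝ) * h
  · intro h
    linear_combination (-4 : ℝ) * h

theorem anticurvatureNumerator_neg_six_fifths (b : ℝ) :
    anticurvatureNumerator b (-6 / 5) = b ^ 2 * (48 / 5 - b ^ 2) := by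
  rw [anticurvatureNumerator]
  ring

end BianchiI

open BianchiI in
/-- In a Bianchi I background with anisotropy b = β', the anticurvature scalar
A vanishes iff ξ = (24 - b⁴/4)/(2b² - 20); for b = 0 this reduces to ξ = -6/5,
while at ξ = -6/5 a nonzero anisotropy with b² ≠ 48/5 gives A ≠ 0: the
anisotropy shifts, but does not remove, the zero of A. -/
theorem stmt2 (b ξ H : ℝ) (hH : H ≠ 0) (h1 : 3 + ξ ≠ 0)
    (h2 : 1 + ξ + b^2/6 ≠ 0) (h3 : 1 - b^2/4 ≠ 0) (h4 : b^2 ≠ 10) :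
    let A := (1/H^2) * ((4*ξ + 6 + b^2/2)/(3*(3 + ξ)*(1 + ξ + b^2/6))
      + 2*(3 + ξ)/((3 + ξ)^2*(1 - b^2/4)))
    (A = 0 ↔ ξ = (24 - b^4/4)/(2*b^2 - 20)) ∧
    (b = 0 → (24 - b^4/4)/(2*b^2 - 20) = -6/5) ∧
    (ξ = -6/5 → b ≠ 0 → b^2 ≠ 48/5 → A ≠ 0) := by
  intro A
  have h2' : 6 + 6 * ξ + b ^ 2 ≠ 0 := by contrapose! h2; linarith
  have h3' : 4 - b ^ 2 ≠ 0 := by contrapose! h3; linarith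
  have hA : A = 0 ↔ anticurvatureNumerator b ξ = 0 := by
    simp only [A, anticurvature_bracket_eq h1 h2 h3, mul_eq_zero, div_eq_zero_iff, one_div,
      inv_eq_zero, pow_eq_zero_iff two_ne_zero, hH, h1, h2', h3', false_or, or_false]
  refine ⟨hA.trans (anticurvatureNumerator_eq_zero_iff h4), ?_, ?_⟩
  · rintro rfl
    norm_num
  · rintro rfl hb hb48
    rw [Ne, hA, anticurvatureNumerator_neg_six_fifths]
    exact mul_ne_zero (pow_ne_zero 2 hb) (sub_ne_zero.mpr (Ne.symm hb48))
end

section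
/- Let α > 0 and H > 0, and set R = 12H² and A = 4/(3H²) (the values of the Ricci and anticurvature scalars on a de Sitter background). For the Lagrangian f(R,A) = R - αA, so that f_R = 1 and f_A = -α, the vacuum trace equation f_R·R - f_A·A - 2f = 0 holds if and only if H = (α/3)^{1/4}. Hence this Ricci-inverse model admits a nontrivial (H ≠ 0) de Sitter solution that can replace a cosmological constant. -/
/-- For f(R,A) = R - αA on a de Sitter background (R = 12H², A = 4/(3H²)),
the vacuum trace equation f_R·R - f_A·A - 2f = 0 holds iff H = (α/3)^(1/4):
a nontrivial de Sitter solution replacing a cosmological constant. -/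
theorem stmt3 (α H : ℝ) (hα : 0 < α) (hH : 0 < H) :
    let R := 12*H^2
    let A := 4/(3*H^2)
    let f := R - α*A
    let fR : ℝ := 1
    let fA : ℝ := -α
    (fR*R - fA*A - 2*f = 0 ↔ H = (α/3) ^ ((1:ℝ)/4)) := by
  intro R A f fR fA
  have hH2 : (H:ℝ)^2 ≠ 0 := by positivity
  have key : ((α/3) ^ ((1:ℝ)/4)) ^ (4:ℕ) = α/3 := by
    rw [← Real.rpow_natCast ((α/3) ^ ((1:ℝ)/4)) 4, ← Real.rpow_mul (by positivity)]
    norm_num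
  constructor
  · intro h
    have h4 : H^(4:ℕ) = α/3 := by
      simp only [fR, fA, R, A, f] at h
      field_simp at h
      nlinarith [h]
    calc H = ((H^(4:ℕ) : ℝ))^((1:ℝ)/4) := by
            rw [← Real.rpow_natCast H 4, ← Real.rpow_mul hH.le]
            norm_num
      _ = (α/3) ^ ((1:ℝ)/4) := by rw [h4]
  · intro h
    have h4 : H^(4:ℕ) = α/3 := by rw [h]; exact key
    simp only [fR, fA, R, A, f]
    field_simp
    nlinarith [h4]
end

section
/- Let H, ρ, P, V, α, M be real numbers with M > 0 and 1 - 2αV ≠ 0, and suppose (with m² = 0 and X = Y = 0) the critical-point conditions hold: (i) (ρ-P)/(2M²(1-2αV)) - 3H² = 0, (ii) -3H(ρ+P) = 0, (iii) -6H² - 6(ρ-P)/(2M²(1-2αV)) = 0, together with the Friedmann constraint (iv) 3H²(1-2αV) = ρ/M². Then H = 0, ρ = 0 and P = 0; i.e. the only critical point at finite distance of the VAAS system with m² = 0 and constant auxiliary fields is Minkowski space (the values of U and V remain arbitrary, except V ≠ 1/(2α)). -/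
/-- The only critical point at finite distance of the VAAS system with m² = 0
and constant auxiliary fields (X = Y = 0) is Minkowski space: the
critical-point conditions together with the Friedmann constraint force
H = 0, ρ = 0 and P = 0 (U and V remaining arbitrary, except V ≠ 1/(2α)). -/
theorem stmt7 (H ρ P V α M : ℝ) (hM : 0 < M) (hV : 1 - 2*α*V ≠ 0)
    (e1 : (ρ - P)/(2*M^2*(1 - 2*α*V)) - 3*H^2 = 0)
    (e2 : -3*H*(ρ + P) = 0)
    (e3 : -6*H^2 - 6*(ρ - P)/(2*M^2*(1 - 2*α*V)) = 0)
    (e4 : 3*H^2*(1 - 2*α*V) = ρ/M^2) :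
    H = 0 ∧ ρ = 0 ∧ P = 0 := by
  have hM2 : (M:ℝ)^2 ≠ 0 := pow_ne_zero 2 hM.ne'
  have hD : 2*M^2*(1 - 2*α*V) ≠ 0 := by
    refine mul_ne_zero (mul_ne_zero two_ne_zero hM2) hV
  have hH : H = 0 := by
    have h1 : (ρ - P)/(2*M^2*(1 - 2*α*V)) = 3*H^2 := by linarith
    rw [mul_div_assoc, h1] at e3
    have h3 : H^2 = 0 := by nlinarith [e3]
    exact pow_eq_zero_iff (n := 2) (by norm_num) |>.mp h3
  subst hH
  have hρP : ρ - P = 0 := by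
    field_simp at e1
    linarith
  have hρ : ρ = 0 := by
    field_simp at e4
    linarith
  exact ⟨rfl, hρ, by linarith⟩
end

section
/- Let N_i ∈ ℝ and let ξ : ℝ → ℝ be continuous with ξ(N) ≥ -2 for all N ≥ N_i. Define F(N) = ∫_{N_i}^N (3 + ξ(s)) ds and X(N) = -6 e^{-F(N)} ∫_{N_i}^N e^{F(s)}(2 + ξ(s)) ds. Then for every N ≥ N_i one has -6 < X(N) ≤ 0. (The lower bound follows from the identity X(N) = -6 + 6e^{-F(N)} + 6e^{-F(N)}∫_{N_i}^N e^{F(s)} ds, whose last two terms are strictly positive; the upper bound follows since 2 + ξ ≥ 0.) -/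
/-- Bounds on X = U' in the VAAS model: with ξ continuous and ξ ≥ -2 from N_i
onwards, F(N) = ∫_{N_i}^N (3 + ξ) and
X(N) = -6 e^{-F(N)} ∫_{N_i}^N e^{F(s)}(2 + ξ(s)) ds satisfy -6 < X(N) ≤ 0
for every N ≥ N_i. -/
theorem stmt9 (Ni : ℝ) (ξ : ℝ → ℝ) (hcont : Continuous ξ)
    (hξ : ∀ N, Ni ≤ N → -2 ≤ ξ N) :
    let F : ℝ → ℝ := fun N => ∫ s in Ni..N, (3 + ξ s)
    let X : ℝ → ℝ := fun N =>
      -6 * Real.exp (-F N) * ∫ s in Ni..N, Real.exp (F s) * (2 + ξ s)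
    ∀ N, Ni ≤ N → -6 < X N ∧ X N ≤ 0 := by
  intro F X N hN
  have hcont3 : Continuous fun s => 3 + ξ s := continuous_const.add hcont
  have hFderiv : ∀ x : ℝ, HasDerivAt F (3 + ξ x) x := by
    intro x
    exact intervalIntegral.integral_hasDerivAt_right
      (hcont3.intervalIntegrable _ _)
      (hcont3.stronglyMeasurableAtFilter _ _) hcont3.continuousAt
  have hFcont : Continuous F := by
    have : Differentiable ℝ F := fun x => (hFderiv x).differentiableAt
    exact this.continuous
  have hGderiv : ∀ x : ℝ, HasDerivAt (fun s => Real.exp (F s))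
      (Real.exp (F x) * (3 + ξ x)) x := fun x => (hFderiv x).exp
  have hFNi : F Ni = 0 := intervalIntegral.integral_same
  have hint1 : (∫ s in Ni..N, Real.exp (F s) * (3 + ξ s))
      = Real.exp (F N) - 1 := by
    have := intervalIntegral.integral_eq_sub_of_hasDerivAt
      (f := fun s => Real.exp (F s))
      (f' := fun s => Real.exp (F s) * (3 + ξ s))
      (a := Ni) (b := N)
      (fun x _ => hGderiv x)
      (((hFcont.rexp).mul hcont3).intervalIntegrable _ _)
    rw [this]; simp [hFNi]
  have hi1 : IntervalIntegrable (fun s => Real.exp (F s) * (3 + ξ s))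
      MeasureTheory.volume Ni N := ((hFcont.rexp).mul hcont3).intervalIntegrable _ _
  have hi2 : IntervalIntegrable (fun s => Real.exp (F s))
      MeasureTheory.volume Ni N := (hFcont.rexp).intervalIntegrable _ _
  have hsplit : (∫ s in Ni..N, Real.exp (F s) * (2 + ξ s))
      = (∫ s in Ni..N, Real.exp (F s) * (3 + ξ s)) - ∫ s in Ni..N, Real.exp (F s) := by
    rw [← intervalIntegral.integral_sub hi1 hi2]
    congr 1
    ext s
    ring
  have hI2nonneg : 0 ≤ ∫ s in Ni..N, Real.exp (F s) :=
    intervalIntegral.integral_nonneg hN (fun x _ => (Real.exp_pos _).le)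
  have hXval : X N = -6 + 6 * Real.exp (-F N)
      + 6 * Real.exp (-F N) * ∫ s in Ni..N, Real.exp (F s) := by
    show -6 * Real.exp (-F N) * (∫ s in Ni..N, Real.exp (F s) * (2 + ξ s)) = _
    rw [hsplit, hint1]
    have h := Real.exp_neg (F N)
    have h2 : Real.exp (-F N) * Real.exp (F N) = 1 := by
      rw [← Real.exp_add]; simp
    ring_nf
    nlinarith [h2]
  constructor
  · rw [hXval]
    have h1 : 0 < Real.exp (-F N) := Real.exp_pos _
    nlinarith
  · show -6 * Real.exp (-F N) * (∫ s in Ni..N, Real.exp (F s) * (2 + ξ s)) ≤ 0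
    have hInonneg : 0 ≤ ∫ s in Ni..N, Real.exp (F s) * (2 + ξ s) := by
      apply intervalIntegral.integral_nonneg hN
      intro x hx
      have := hξ x hx.1
      have := (Real.exp_pos (F x)).le
      nlinarith
    have h1 : 0 < Real.exp (-F N) := Real.exp_pos _
    nlinarith
end

section
/- Let N_i ∈ ℝ and c > 0, and define Ṽ(N) = -(c/20)e^{4N} - (c/5)e^{5N_i - N} + (c/4)e^{4N_i} + 1. Then Ṽ is a solution of the second-order ODE Ṽ''(N) + Ṽ'(N) = -c·e^{4N} for all N, with initial conditions Ṽ(N_i) = 1 and Ṽ'(N_i) = 0. -/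
/-!
The operator `d²/dN² + d/dN` kills constants and `e^{-N}` and multiplies `e^{4N}` by `4 · 5 = 20`,
which forces the coefficient `-c/20`; the coefficients of `e^{-N}` and of the constant are then
fixed by the two initial conditions.
-/

open Real

theorem hasDerivAt_exp_const_mul (a x : ℝ) :
    HasDerivAt (fun x => exp (a * x)) (a * exp (a * x)) x := by
  simpa [mul_comm] using ((hasDerivAt_id x).const_mul a).exp

theorem hasDerivAt_exp_const_sub (b x : ℝ) :
    HasDerivAt (fun x => exp (b - x)) (-exp (b - x)) x := by
  simpa using ((hasDerivAt_id x).const_sub b).exp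

section ExpCombination

variable (A B C b k : ℝ)

theorem deriv_exp_combination :
    deriv (fun x => A * exp (k * x) + B * exp (b - x) + C) =
      fun x => A * k * exp (k * x) - B * exp (b - x) := by
  funext x
  refine ((((hasDerivAt_exp_const_mul k x).const_mul A).add
    ((hasDerivAt_exp_const_sub b x).const_mul B)).add_const C).deriv.trans ?_
  ring

theorem deriv_deriv_add_deriv_exp_combination (x : ℝ) :
    deriv (deriv fun x => A * exp (k * x) + B * exp (b - x) + C) x +
        deriv (fun x => A * exp (k * x) + B * exp (b - x) + C) x =
      A * k * (k + 1) * exp (k * x) := by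
  have h := deriv_exp_combination (A * k) (-B) 0 b k
  simp only [add_zero, neg_mul, sub_neg_eq_add, ← sub_eq_add_neg] at h
  rw [deriv_exp_combination, h]
  ring

end ExpCombination

theorem stmt10_general (Ni c : ℝ) :
    let V : ℝ → ℝ := fun N =>
      -(c/20)*Real.exp (4*N) - (c/5)*Real.exp (5*Ni - N) + (c/4)*Real.exp (4*Ni) + 1
    (∀ N, deriv (deriv V) N + deriv V N = -c * Real.exp (4*N)) ∧
    V Ni = 1 ∧ deriv V Ni = 0 := by
  intro V
  have hV : V = fun N => -(c/20) * exp (4 * N) + -(c/5) * exp (5 * Ni - N) +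
      ((c/4) * exp (4 * Ni) + 1) := by
    funext N
    simp only [V]
    ring
  have hNi : 5 * Ni - Ni = 4 * Ni := by ring
  refine ⟨fun N => ?_, ?_, ?_⟩
  · rw [hV, deriv_deriv_add_deriv_exp_combination]
    ring
  · simp only [V, hNi]
    ring
  · rw [hV, deriv_exp_combination]
    simp only [hNi]
    ring

/-- The radiation-era solution of the localized Klein–Gordon equation of the
VAAS model: Ṽ(N) = -(c/20)e^{4N} - (c/5)e^{5N_i - N} + (c/4)e^{4N_i} + 1
solves Ṽ'' + Ṽ' = -c·e^{4N} with Ṽ(N_i) = 1 and Ṽ'(N_i) = 0. -/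
theorem stmt10 (Ni c : ℝ) (hc : 0 < c) :
    let V : ℝ → ℝ := fun N =>
      -(c/20)*Real.exp (4*N) - (c/5)*Real.exp (5*Ni - N) + (c/4)*Real.exp (4*Ni) + 1
    (∀ N, deriv (deriv V) N + deriv V N = -c * Real.exp (4*N)) ∧
    V Ni = 1 ∧ deriv V Ni = 0 :=
  stmt10_general Ni c
end

section
/- Let B, k, a, m², α, Φ, Ψ, δU, δV be real numbers with a ≠ 0 and α ≠ 0, satisfying: (i) -2B(k²/a²)(Ψ + Φ) - (3m²/2)δU - 2α(k²/a²)δV = 0; (ii) δU = -2(Ψ + 2Φ); (iii) (k²/a²)δV = (m²/α)Ψ. Then (2Bk² - 6m²a²)Φ = -(2Bk² - m²a²)Ψ. Consequently, if Ψ ≠ 0 and 2Bk² ≠ 6m²a², the gravitational slip is η := -Φ/Ψ = (2Bk² - m²a²)/(2Bk² - 6m²a²); in particular η → 1 (the general-relativistic value Φ = -Ψ) as m² → 0. -/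
/-! Eliminating `δU` and `δV` from the perturbed field equation leaves a single linear relation
between the potentials, `(2Bk² - 6m²a²)Φ + (2Bk² - m²a²)Ψ = 0`; the slip is the ratio of its
coefficients, and at `m² = 0` the two coefficients coincide. -/

section QuasiStatic

variable {K : Type*} [Field K] [CharZero K]

theorem quasiStatic_potential_relation {B k a m2 α Φ Ψ δU δV : K} (ha : a ≠ 0) (hα : α ≠ 0)
    (e1 : -2*B*(k^2/a^2)*(Ψ + Φ) - (3*m2/2)*δU - 2*α*(k^2/a^2)*δV = 0)
    (e2 : δU = -2*(Ψ + 2*Φ))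
    (e3 : (k^2/a^2)*δV = (m2/α)*Ψ) :
    (2*B*k^2 - 6*m2*a^2)*Φ = -(2*B*k^2 - m2*a^2)*Ψ := by
  have hk : (k^2/a^2)*a^2 = k^2 := div_mul_cancel₀ _ (pow_ne_zero 2 ha)
  have hV : α*((k^2/a^2)*δV) = m2*Ψ := by
    rw [e3, ← mul_assoc, mul_div_cancel₀ _ hα]
  rw [← hk]
  linear_combination (-a^2)*e1 - (3*m2*a^2/2)*e2 - 2*a^2*hV

end QuasiStatic

theorem neg_div_eq_div_of_mul_eq_neg_mul {K : Type*} [Field K] {A C Φ Ψ : K}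
    (h : A*Φ = -C*Ψ) (hΨ : Ψ ≠ 0) (hA : A ≠ 0) : -Φ/Ψ = C/A := by
  rw [div_eq_div_iff hΨ hA]
  linear_combination -h

/-- Quasi-static perturbations in VAAS gravity: from the perturbed field
equation and the equations for δU, δV one gets
(2Bk² - 6m²a²)Φ = -(2Bk² - m²a²)Ψ, hence the gravitational slip
η = -Φ/Ψ = (2Bk² - m²a²)/(2Bk² - 6m²a²), which reduces to the GR value 1
when m² = 0. -/
theorem stmt12 (B k a m2 α Φ Ψ δU δV : ℝ) (ha : a ≠ 0) (hα : α ≠ 0)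
    (e1 : -2*B*(k^2/a^2)*(Ψ + Φ) - (3*m2/2)*δU - 2*α*(k^2/a^2)*δV = 0)
    (e2 : δU = -2*(Ψ + 2*Φ))
    (e3 : (k^2/a^2)*δV = (m2/α)*Ψ) :
    ((2*B*k^2 - 6*m2*a^2)*Φ = -(2*B*k^2 - m2*a^2)*Ψ) ∧
    (Ψ ≠ 0 → 2*B*k^2 ≠ 6*m2*a^2 →
      -Φ/Ψ = (2*B*k^2 - m2*a^2)/(2*B*k^2 - 6*m2*a^2)) ∧
    (m2 = 0 → 2*B*k^2 ≠ 0 →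
      (2*B*k^2 - m2*a^2)/(2*B*k^2 - 6*m2*a^2) = 1) := by
  have hrel := quasiStatic_potential_relation ha hα e1 e2 e3
  refine ⟨hrel, fun hΨ hne => neg_div_eq_div_of_mul_eq_neg_mul hrel hΨ (sub_ne_zero.mpr hne), ?_⟩
  rintro rfl hBk
  simpa using div_self hBk
end

section
/- Let a : ℝ → ℝ be differentiable and positive, with Hubble function H = a'/a. Let t_e : ℝ → ℝ be differentiable and satisfy the light-propagation condition t_e'(t₀) = a(t_e(t₀))/a(t₀) for all t₀, and define the redshift z(t₀) by 1 + z(t₀) = a(t₀)/a(t_e(t₀)). Then z is differentiable and obeys the redshift-drift formula dz/dt₀ = (1 + z(t₀))·H(t₀) - H(t_e(t₀)). -/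
/-! The redshift is `1 + z = a / (a ∘ t_e)`, so its logarithmic derivative is `H(t₀) - H(t_e) · t_e'`.
The light-propagation condition `t_e' = a(t_e)/a(t₀)` turns the second term, once multiplied by
`1 + z`, into exactly `H(t_e)`. -/

theorem HasDerivAt.div_logDeriv {f g : ℝ → ℝ} {f' g' x : ℝ}
    (hf : HasDerivAt f f' x) (hg : HasDerivAt g g' x) (hf0 : f x ≠ 0) (hg0 : g x ≠ 0) :
    HasDerivAt (fun y => f y / g y) (f x / g x * (f' / f x - g' / g x)) x :=
  (hf.div hg hg0).congr_deriv (by field_simp)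

theorem hasDerivAt_comp_emissionTime {a te : ℝ → ℝ} {t₀ : ℝ} (ha : DifferentiableAt ℝ a (te t₀))
    (hte : DifferentiableAt ℝ te t₀) (hlight : deriv te t₀ = a (te t₀) / a t₀) :
    HasDerivAt (fun t => a (te t)) (deriv a (te t₀) * (a (te t₀) / a t₀)) t₀ :=
  hlight ▸ ha.hasDerivAt.comp t₀ hte.hasDerivAt

/-- Redshift-drift formula: in an expanding universe with scale factor a > 0,
Hubble function H = a'/a, emission time obeying t_e'(t₀) = a(t_e)/a(t₀) and
redshift 1 + z = a(t₀)/a(t_e), the redshift drift is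
dz/dt₀ = (1 + z)H(t₀) - H(t_e(t₀)). -/
theorem stmt18 (a te : ℝ → ℝ) (ha : Differentiable ℝ a) (hpos : ∀ t, 0 < a t)
    (hte : Differentiable ℝ te)
    (hlight : ∀ t₀, deriv te t₀ = a (te t₀) / a t₀) :
    let H : ℝ → ℝ := fun t => deriv a t / a t
    let z : ℝ → ℝ := fun t₀ => a t₀ / a (te t₀) - 1
    Differentiable ℝ z ∧
    (∀ t₀, deriv z t₀ = (1 + z t₀) * H t₀ - H (te t₀)) := by
  intro H z
  have hne : ∀ t, a t ≠ 0 := fun t => (hpos t).ne'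
  refine ⟨(ha.div (ha.comp hte) fun t => hne _).sub_const 1, fun t₀ => ?_⟩
  have hratio := (ha t₀).hasDerivAt.div_logDeriv
    (hasDerivAt_comp_emissionTime (ha _) (hte t₀) (hlight t₀)) (hne _) (hne _)
  rw [(hratio.sub_const 1).deriv]
  simp only [H, z]
  field_simp [hne t₀, hne (te t₀)]
  ring
end

section
/- Let θ_E, G, z_L : ℝ → ℝ be differentiable with θ_E > 0, G > 0 and 1 + z_L > 0, and suppose θ_E(t)² = 4·G(t)·M·(1 + z_L(t))·C for constants M, C > 0. Then 2·θ_E'(t)/θ_E(t) = G'(t)/G(t) + z_L'(t)/(1 + z_L(t)) for all t. In particular, if the lens redshift obeys the drift law z_L' = (1 + z_L)H₀ - H_L, then 2θ̇_E/θ_E = Ġ/G + H₀ - H_L/(1 + z_L): the angular drift of the Einstein radius is sensitive both to the Hubble flow and to a time variation of the gravitational coupling, and reduces to 2θ̇_E/θ_E = H₀ - H_L/(1+z_L) when G is constant. -/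
/-! Taking logarithmic derivatives of θ_E² = 4 G M (1 + z_L) C turns the product into a sum:
the constants M, C drop out and 2 θ_E'/θ_E = G'/G + z_L'/(1 + z_L). The drift law then rewrites
z_L'/(1 + z_L) as H₀ - H_L/(1 + z_L). -/

open Filter Topology

section LogDeriv

variable {𝕜 : Type*} [NontriviallyNormedField 𝕜] {θ f g : 𝕜 → 𝕜} {c x : 𝕜}

theorem two_mul_logDeriv_eq_add_of_sq_eventuallyEq (hθ : DifferentiableAt 𝕜 θ x)
    (hf : DifferentiableAt 𝕜 f x) (hg : DifferentiableAt 𝕜 g x)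
    (hc : c ≠ 0) (hfx : f x ≠ 0) (hgx : g x ≠ 0)
    (h : (θ · ^ 2) =ᶠ[𝓝 x] fun y ↦ c * (f y * g y)) :
    2 * logDeriv θ x = logDeriv f x + logDeriv g x := by
  have := (logDeriv_congr_nhds h).eq_of_nhds
  rw [logDeriv_fun_pow hθ, logDeriv_const_mul x c hc, logDeriv_mul x hfx hgx hf hg] at this
  exact_mod_cast this

theorem logDeriv_const_add_apply (a : 𝕜) (f : 𝕜 → 𝕜) (x : 𝕜) :
    logDeriv (fun y ↦ a + f y) x = deriv f x / (a + f x) := by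
  rw [logDeriv_apply, deriv_const_add]

end LogDeriv

theorem div_one_add_eq_of_drift {K : Type*} [Field K] {z z' H₀ HL : K} (hz : 1 + z ≠ 0)
    (hdrift : z' = (1 + z) * H₀ - HL) :
    z' / (1 + z) = H₀ - HL / (1 + z) := by
  rw [hdrift, sub_div, mul_div_cancel_left₀ _ hz]

theorem stmt19_general (θE G zL : ℝ → ℝ) (M C H₀ HL : ℝ)
    (hθ : Differentiable ℝ θE) (hG : Differentiable ℝ G)
    (hz : Differentiable ℝ zL)
    (hGpos : ∀ t, 0 < G t)
    (hzpos : ∀ t, 0 < 1 + zL t)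
    (hM : 0 < M) (hC : 0 < C)
    (hlens : ∀ t, (θE t)^2 = 4 * G t * M * (1 + zL t) * C) :
    (∀ t, 2 * deriv θE t / θE t = deriv G t / G t + deriv zL t / (1 + zL t)) ∧
    ((∀ t, deriv zL t = (1 + zL t)*H₀ - HL) →
      ∀ t, 2 * deriv θE t / θE t = deriv G t / G t + H₀ - HL/(1 + zL t)) ∧
    ((∀ t, deriv zL t = (1 + zL t)*H₀ - HL) → (∀ t, deriv G t = 0) →
      ∀ t, 2 * deriv θE t / θE t = H₀ - HL/(1 + zL t)) := by
  have einstein (t : ℝ) :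
      2 * deriv θE t / θE t = deriv G t / G t + deriv zL t / (1 + zL t) := by
    have h := two_mul_logDeriv_eq_add_of_sq_eventuallyEq (c := 4 * M * C) (hθ t) (hG t)
      ((hz t).const_add 1) (by positivity) (hGpos t).ne' (hzpos t).ne'
      (.of_forall fun s ↦ by dsimp only; rw [hlens]; ring)
    rwa [logDeriv_const_add_apply, logDeriv_apply, logDeriv_apply, ← mul_div_assoc] at h
  refine ⟨einstein, fun hdrift t ↦ ?_, fun hdrift hGconst t ↦ ?_⟩
  · rw [einstein, div_one_add_eq_of_drift (hzpos t).ne' (hdrift t), add_sub_assoc]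
  · rw [einstein, div_one_add_eq_of_drift (hzpos t).ne' (hdrift t), hGconst, zero_div, zero_add]

/-- Angular drift of the Einstein radius: if θ_E(t)² = 4G(t)M(1+z_L(t))C with
M, C > 0, then 2θ_E'/θ_E = G'/G + z_L'/(1+z_L); if moreover the lens redshift
obeys the drift law z_L' = (1+z_L)H₀ - H_L, then
2θ̇_E/θ_E = Ġ/G + H₀ - H_L/(1+z_L), reducing to 2θ̇_E/θ_E = H₀ - H_L/(1+z_L)
when G is constant. -/
theorem stmt19 (θE G zL : ℝ → ℝ) (M C H₀ HL : ℝ)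
    (hθ : Differentiable ℝ θE) (hG : Differentiable ℝ G)
    (hz : Differentiable ℝ zL)
    (hθpos : ∀ t, 0 < θE t) (hGpos : ∀ t, 0 < G t)
    (hzpos : ∀ t, 0 < 1 + zL t)
    (hM : 0 < M) (hC : 0 < C)
    (hlens : ∀ t, (θE t)^2 = 4 * G t * M * (1 + zL t) * C) :
    (∀ t, 2 * deriv θE t / θE t = deriv G t / G t + deriv zL t / (1 + zL t)) ∧
    ((∀ t, deriv zL t = (1 + zL t)*H₀ - HL) →
      ∀ t, 2 * deriv θE t / θE t = deriv G t / G t + H₀ - HL/(1 + zL t)) ∧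
    ((∀ t, deriv zL t = (1 + zL t)*H₀ - HL) → (∀ t, deriv G t = 0) →
      ∀ t, 2 * deriv θE t / θE t = H₀ - HL/(1 + zL t)) :=
  stmt19_general θE G zL M C H₀ HL hθ hG hz hGpos hzpos hM hC hlens
end
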